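/- arXiv:2012.04569 — 3 statements merged into one kernel-verified Lean document; each statement's English description precedes it below -/
import Mathlib

section
/- Assume that for every real number t ≥ 3275 there is a prime number in the interval [t, t + t/(2 (ln t)^2)]. Then for every real number t ≥ 3275^2 there is a prime number q such that q^2 lies in the interval [t, t + 7t/(ln t)^2]. -/
open Real

/-
Apply Dusart's theorem at `√t`: a prime `p` with `√t ≤ p ≤ √t (1 + 2/ln² t)` (as `ln √t = ln t / 2`)
has `t ≤ p² ≤ t (1 + 2u)²` with `u = 1/ln² t ≤ 1/4`, and `(1 + 2u)² ≤ 1 + 5u` in that range.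
-/

lemma exp_two_lt_eight : exp 2 < 8 := by
  have h := exp_one_lt_d9
  have h2 : exp 2 = exp 1 ^ 2 := by rw [← exp_nat_mul]; norm_num
  rw [h2]
  nlinarith [exp_pos 1]

lemma two_le_log_of_eight_le {t : ℝ} (ht : 8 ≤ t) : 2 ≤ log t := by
  rw [le_log_iff_exp_le (by linarith)]
  linarith [exp_two_lt_eight]

lemma sqrt_add_div_two_mul_log_sqrt_sq {t : ℝ} (ht : 0 ≤ t) :
    √t + √t / (2 * log √t ^ 2) = √t * (1 + 2 / log t ^ 2) := by
  rw [log_sqrt ht]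
  ring

lemma one_add_two_mul_sq_le {u : ℝ} (hu₀ : 0 ≤ u) (hu : u ≤ 1 / 4) :
    (1 + 2 * u) ^ 2 ≤ 1 + 5 * u := by
  nlinarith

lemma sq_le_add_div_of_le_sqrt_mul {t L x : ℝ} (ht : 0 ≤ t) (hL : 4 ≤ L) (hx : 0 ≤ x)
    (h : x ≤ √t * (1 + 2 / L)) : x ^ 2 ≤ t + 5 * t / L := by
  have hu : 1 / L ≤ 1 / 4 := one_div_le_one_div_of_le (by norm_num) hL
  calc x ^ 2 ≤ (√t * (1 + 2 / L)) ^ 2 := by gcongr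
    _ = t * (1 + 2 * (1 / L)) ^ 2 := by rw [mul_pow, sq_sqrt ht]; ring
    _ ≤ t * (1 + 5 * (1 / L)) := by
        gcongr; exact one_add_two_mul_sq_le (by positivity) hu
    _ = t + 5 * t / L := by ring

/-- Assuming Dusart's theorem (for every real `t ≥ 3275` there is a prime in
`[t, t + t/(2 ln² t)]`), for every real `t ≥ 3275²` there is a prime `q` with
`q²` in `[t, t + 7t/(ln t)²]`. -/
theorem stmt_7
    (hDusart : ∀ t : ℝ, 3275 ≤ t →
      ∃ p : ℕ, p.Prime ∧ t ≤ p ∧ (p : ℝ) ≤ t + t / (2 * Real.log t ^ 2)) :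
    ∀ t : ℝ, (3275 : ℝ) ^ 2 ≤ t →
      ∃ q : ℕ, q.Prime ∧ t ≤ (q : ℝ) ^ 2 ∧ (q : ℝ) ^ 2 ≤ t + 7 * t / Real.log t ^ 2 := by
  intro t ht
  have ht₀ : 0 ≤ t := le_trans (by positivity) ht
  obtain ⟨p, hp, hsp, hps⟩ := hDusart √t (le_sqrt_of_sq_le ht)
  rw [sqrt_add_div_two_mul_log_sqrt_sq ht₀] at hps
  have hL : 4 ≤ log t ^ 2 := by
    nlinarith [two_le_log_of_eight_le (show (8 : ℝ) ≤ t by linarith)]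
  refine ⟨p, hp, ?_, ?_⟩
  · calc t = √t ^ 2 := (sq_sqrt ht₀).symm
      _ ≤ (p : ℝ) ^ 2 := by gcongr
  · calc (p : ℝ) ^ 2 ≤ t + 5 * t / log t ^ 2 :=
          sq_le_add_div_of_le_sqrt_mul ht₀ hL p.cast_nonneg hps
      _ ≤ t + 7 * t / log t ^ 2 := by gcongr; norm_num
end

section
/- Let k ≥ 3 be odd and let G be a finite k-regular simple graph with girth at least 5 whose edge set is partitioned into a family 𝒯 of trees, each of diameter at most 3, such that every vertex belongs to at most (k+1)/2 trees of 𝒯. Then G contains a perfect matching. -/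
/-!
Call a vertex internal to a tree if it has at least two neighbours there. A vertex has degree
`k` but lies in at most `(k + 1) / 2 < k` trees, so it is internal to some tree. In a tree of
diameter at most 3 the internal vertices are pairwise adjacent (two non-adjacent ones could be
extended away from each other to a path of length at least 4), so there are at most two.

A tree with an edge has one vertex more than it has edges, so counting vertex-tree incidences
gives `|E| + m ≤ n (k + 1) / 2`, where `m` is the number of trees with an edge; as
`2 |E| = n k` with `k` odd, `2 m ≤ n`. Hence
`n ≤ #{(v, T) : v internal to T} ≤ 2 m ≤ n`, so every vertex is internal to exactly one tree and
every tree with an internal vertex has exactly two of them, which are adjacent: these pairs form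
a perfect matching.
-/

section Counting

variable {α ι : Type*} [Fintype α] [Fintype ι]

lemma sum_ncard_setOf_comm (P : α → ι → Prop) :
    ∑ a, {i | P a i}.ncard = ∑ i, {a | P a i}.ncard := by
  classical
  simp only [Set.ncard_eq_toFinset_card', Set.toFinset_ofPred, Finset.card_filter]
  exact Finset.sum_comm

lemma sum_ncard_eq_ncard_of_existsUnique {s : Set α} {P : ι → Set α}
    (hP : ∀ a ∈ s, ∃! i, a ∈ P i) (hsub : ∀ i, P i ⊆ s) : ∑ i, (P i).ncard = s.ncard := by
  classical
  have hfiber : ∀ a, {i | a ∈ P i}.ncard = if a ∈ s then 1 else 0 := by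
    intro a
    split_ifs with ha
    · obtain ⟨i, hi, huniq⟩ := hP a ha
      exact Set.ncard_eq_one.mpr ⟨i, Set.ext fun j => ⟨huniq j, fun h => h ▸ hi⟩⟩
    · have hempty : {i | a ∈ P i} = ∅ :=
        Set.eq_empty_of_forall_notMem fun i hi => ha (hsub i hi)
      rw [hempty, Set.ncard_empty]
  have hcomm := sum_ncard_setOf_comm (fun a i => a ∈ P i)
  simp only [Set.ofPred_mem_eq] at hcomm
  rw [← hcomm, Finset.sum_congr rfl fun a _ => hfiber a, ← Finset.card_filter,
    Set.ncard_eq_toFinset_card']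
  simp

lemma exists_one_lt_of_ncard_ne_zero_lt_sum (d : ι → ℕ) (h : {i | d i ≠ 0}.ncard < ∑ i, d i) :
    ∃ i, 1 < d i := by
  classical
  by_contra! hd
  have hsum : ∑ i, d i = {i | d i ≠ 0}.ncard := by
    rw [Set.ncard_eq_toFinset_card', Set.toFinset_ofPred, Finset.card_filter]
    exact Finset.sum_congr rfl fun i _ => by have := hd i; split_ifs <;> omega
  omega

lemma forall_existsUnique_mem_and_ncard_eq_two {S : ι → Set α} (hS : ∀ i, (S i).ncard ≤ 2)
    (hcover : ∀ a, ∃ i, a ∈ S i) (hfew : 2 * {i | (S i).Nonempty}.ncard ≤ Fintype.card α) :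
    (∀ a, ∃! i, a ∈ S i) ∧ ∀ i, (S i).Nonempty → (S i).ncard = 2 := by
  classical
  have hone : ∀ a, 1 ≤ {i | a ∈ S i}.ncard :=
    fun a => (Set.ncard_pos (Set.toFinite _)).mpr (hcover a)
  have htwo : ∀ i, (S i).ncard ≤ if (S i).Nonempty then 2 else 0 := by
    intro i
    split_ifs with h
    · exact hS i
    · simp [Set.not_nonempty_iff_eq_empty.mp h]
  -- the double count `card α ≤ ∑ a, #{i | a ∈ S i} = ∑ i, #(S i) ≤ 2 * #{i | S i ≠ ∅}` is tight
  have hlower : ∑ _a : α, 1 ≤ ∑ a, {i | a ∈ S i}.ncard := Finset.sum_le_sum fun a _ => hone a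
  have hupper : ∑ i, (S i).ncard ≤ ∑ i, if (S i).Nonempty then 2 else 0 :=
    Finset.sum_le_sum fun i _ => htwo i
  have hcard : ∑ _a : α, 1 = Fintype.card α := by simp
  have hnonempty : ∑ i, (if (S i).Nonempty then 2 else 0) = 2 * {i | (S i).Nonempty}.ncard := by
    rw [Set.ncard_eq_toFinset_card', Set.toFinset_ofPred, Finset.card_filter, Finset.mul_sum]
    simp
  have hcomm : ∑ a, {i | a ∈ S i}.ncard = ∑ i, (S i).ncard := sum_ncard_setOf_comm _
  constructor
  · intro a
    obtain ⟨i, hi⟩ := Set.ncard_eq_one.mp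
      ((Finset.sum_eq_sum_iff_of_le fun a _ => hone a).mp (by omega) a (Finset.mem_univ a)).symm
    have hmem : ∀ j, a ∈ S j ↔ j = i := fun j => Set.ext_iff.mp hi j
    exact ⟨i, (hmem i).mpr rfl, fun j => (hmem j).mp⟩
  · intro i hi
    simpa [hi] using
      (Finset.sum_eq_sum_iff_of_le fun i _ => htwo i).mp (by omega) i (Finset.mem_univ i)

end Counting

namespace SimpleGraph

variable {W : Type*} {H : SimpleGraph W}

def internalVerts (H : SimpleGraph W) : Set W := {x | 1 < (H.neighborSet x).ncard}

lemma IsTree.exists_adj_dist_eq_add_one (hH : H.IsTree) {x : W} (hx : x ∈ H.internalVerts)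
    (y : W) : ∃ a, H.Adj x a ∧ H.dist a y = H.dist x y + 1 := by
  obtain ⟨a, b, ha, hb, hab⟩ :=
    (Set.one_lt_ncard_iff (Set.finite_of_ncard_pos (Nat.zero_lt_of_lt hx))).mp hx
  obtain ⟨p, hp, hpuniq⟩ := hH.existsUnique_path x y
  by_contra! hfar
  -- a neighbour closer to `y` is the second vertex of the unique `x`-`y` path
  have hsnd : ∀ c, H.Adj x c → H.dist c y ≠ H.dist x y + 1 → c = p.snd := by
    intro c hc hne
    have hcloser : H.dist x y = H.dist c y + 1 := by
      have := hH.dist_eq_dist_add_one_of_adj y hc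
      rw [dist_comm, dist_comm (u := y)] at this
      omega
    obtain ⟨q, hq⟩ := hH.connected.exists_walk_length_eq_dist c y
    have hcq : (Walk.cons hc q).IsPath :=
      (Walk.cons hc q).isPath_of_length_eq_dist (by simp [hq, hcloser])
    rw [← hpuniq _ hcq, Walk.snd_cons]
  exact hab ((hsnd a ha (hfar a ha)).trans (hsnd b hb (hfar b hb)).symm)

lemma IsTree.adj_of_mem_internalVerts (hH : H.IsTree) (hd : ∀ u v, H.dist u v ≤ 3) {x y : W}
    (hxy : x ≠ y) (hx : x ∈ H.internalVerts) (hy : y ∈ H.internalVerts) : H.Adj x y := by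
  obtain ⟨a, -, ha⟩ := hH.exists_adj_dist_eq_add_one hx y
  obtain ⟨b, -, hb⟩ := hH.exists_adj_dist_eq_add_one hy a
  have hpos : 0 < H.dist x y := hH.connected.pos_dist_of_ne hxy
  have hle := hd b a
  rw [hb, dist_comm, ha] at hle
  exact dist_eq_one_iff_adj.mp (by omega)

lemma IsTree.isClique_internalVerts (hH : H.IsTree) (hd : ∀ u v, H.dist u v ≤ 3) :
    H.IsClique H.internalVerts :=
  fun _ hx _ hy hxy => hH.adj_of_mem_internalVerts hd hxy hx hy

lemma IsTree.ncard_internalVerts_le_two (hH : H.IsTree) (hd : ∀ u v, H.dist u v ≤ 3) :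
    H.internalVerts.ncard ≤ 2 := by
  classical
  by_contra! h
  obtain ⟨x, y, z, hx, hy, hz, hxy, hxz, hyz⟩ :=
    (Set.two_lt_ncard_iff (Set.finite_of_ncard_pos (by omega))).mp h
  have hclique := hH.isClique_internalVerts hd
  exact hH.isAcyclic.cliqueFree le_rfl {x, y, z} (is3Clique_triple_iff.mpr
    ⟨hclique hx hy hxy, hclique hx hz hxz, hclique hy hz hyz⟩)

namespace Subgraph

variable {V : Type*} {G : SimpleGraph V} {H : G.Subgraph}

def internalVerts (H : G.Subgraph) : Set V := {v | 1 < (H.neighborSet v).ncard}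

lemma ncard_coe_neighborSet (v : H.verts) :
    (H.coe.neighborSet v).ncard = (H.neighborSet v).ncard :=
  Set.ncard_congr' (H.coeNeighborSetEquiv v)

lemma internalVerts_eq_image : H.internalVerts = (↑) '' H.coe.internalVerts := by
  ext v
  constructor
  · intro hv
    obtain ⟨w, hw⟩ := Set.nonempty_of_ncard_ne_zero (Nat.ne_zero_of_lt hv)
    exact ⟨⟨v, H.edge_vert hw⟩, (ncard_coe_neighborSet _).trans_gt hv, rfl⟩
  · rintro ⟨x, hx, rfl⟩
    exact (ncard_coe_neighborSet x).symm.trans_gt hx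

lemma isClique_internalVerts (hH : H.coe.IsTree) (hd : ∀ x y : H.verts, H.coe.dist x y ≤ 3) :
    G.IsClique H.internalVerts := by
  rw [internalVerts_eq_image]
  rintro _ ⟨x, hx, rfl⟩ _ ⟨y, hy, rfl⟩ hxy
  exact H.adj_sub (hH.isClique_internalVerts hd hx hy (ne_of_apply_ne _ hxy))

lemma ncard_internalVerts_le_two (hH : H.coe.IsTree) (hd : ∀ x y : H.verts, H.coe.dist x y ≤ 3) :
    H.internalVerts.ncard ≤ 2 := by
  rw [internalVerts_eq_image, Set.ncard_image_of_injective _ Subtype.val_injective]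
  exact hH.ncard_internalVerts_le_two hd

lemma internalVerts_subset_support : H.internalVerts ⊆ H.support :=
  fun _ hv => Set.nonempty_of_ncard_ne_zero (Nat.ne_zero_of_lt hv)

lemma support_eq_verts (h : H.Preconnected) (hs : H.support.Nonempty) : H.support = H.verts := by
  obtain ⟨v, w, hvw⟩ := hs
  have : Nontrivial H.verts :=
    ⟨⟨v, H.edge_vert hvw⟩, ⟨w, H.edge_vert hvw.symm⟩, fun h => hvw.ne (congrArg Subtype.val h)⟩
  refine H.support_subset_verts.antisymm fun u hu => ?_
  exact h.exists_adj_of_nontrivial ⟨u, hu⟩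

lemma ncard_support_eq_ncard_edgeSet_add_one [Finite V] (hH : H.coe.IsTree)
    (hs : H.support.Nonempty) : H.support.ncard = H.edgeSet.ncard + 1 := by
  have hcard := (isTree_iff_connected_and_card.mp hH).2
  rw [Nat.card_coe_set_eq, Nat.card_coe_set_eq, ← Set.ncard_image_of_injective _
    (Sym2.map.injective Subtype.val_injective), image_coe_edgeSet_coe] at hcard
  rw [support_eq_verts ⟨hH.connected.preconnected⟩ hs, hcard]

lemma support_nonempty_iff : H.support.Nonempty ↔ H.edgeSet.Nonempty :=
  ⟨fun ⟨v, w, h⟩ => ⟨s(v, w), h⟩, fun ⟨e, he⟩ => Sym2.ind (fun v w h => ⟨v, w, h⟩) e he⟩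

open Classical in
lemma ncard_support_eq_ncard_edgeSet_add_ite [Finite V] (hH : H.coe.IsTree) :
    H.support.ncard = H.edgeSet.ncard + if H.support.Nonempty then 1 else 0 := by
  split_ifs with hs
  · exact ncard_support_eq_ncard_edgeSet_add_one hH hs
  · rw [Set.not_nonempty_iff_eq_empty.mp hs,
      Set.not_nonempty_iff_eq_empty.mp (support_nonempty_iff.not.mp hs)]
    simp

end Subgraph

lemma exists_isPerfectMatching_of_isClique_cover {V ι : Type*} [Fintype V] [Fintype ι]
    {G : SimpleGraph V} {S : ι → Set V} (hclique : ∀ i, G.IsClique (S i))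
    (hS : ∀ i, (S i).ncard ≤ 2) (hcover : ∀ v, ∃ i, v ∈ S i)
    (hfew : 2 * {i | (S i).Nonempty}.ncard ≤ Fintype.card V) :
    ∃ M : G.Subgraph, M.IsPerfectMatching := by
  obtain ⟨huniq, htwo⟩ := forall_existsUnique_mem_and_ncard_eq_two hS hcover hfew
  refine ⟨⨆ i, (⊤ : G.Subgraph).induce (S i), Subgraph.isPerfectMatching_iff.mpr fun v => ?_⟩
  obtain ⟨i, hvi, hi⟩ := huniq v
  obtain ⟨w, hwi, hwv⟩ := (S i).exists_ne_of_one_lt_ncard (by rw [htwo i ⟨v, hvi⟩]; omega) v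
  simp only [Subgraph.iSup_adj, Subgraph.induce_adj, Subgraph.top_adj]
  refine ⟨w, ⟨i, hvi, hwi, hclique i hvi hwi hwv.symm⟩, ?_⟩
  rintro u ⟨j, hvj, huj, hvu⟩
  obtain rfl := hi j hvj
  by_contra huw
  have := (Set.two_lt_ncard_iff (Set.toFinite _)).mpr
    ⟨v, w, u, hvj, hwi, huj, hwv.symm, hvu.ne, fun h => huw h.symm⟩
  exact absurd (hS j) (by omega)

section EdgePartition

variable {V ι : Type*} [Fintype V] [Fintype ι] {G : SimpleGraph V} {T : ι → G.Subgraph}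

lemma sum_ncard_neighborSet_eq (hpart : ∀ e ∈ G.edgeSet, ∃! i, e ∈ (T i).edgeSet) (v : V) :
    ∑ i, ((T i).neighborSet v).ncard = (G.neighborSet v).ncard :=
  sum_ncard_eq_ncard_of_existsUnique (fun w hw => hpart s(v, w) hw)
    (fun i => (T i).neighborSet_subset v)

lemma sum_ncard_edgeSet_eq (hpart : ∀ e ∈ G.edgeSet, ∃! i, e ∈ (T i).edgeSet) :
    ∑ i, (T i).edgeSet.ncard = G.edgeSet.ncard :=
  sum_ncard_eq_ncard_of_existsUnique hpart fun i => (T i).edgeSet_subset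

lemma exists_mem_internalVerts [DecidableRel G.Adj] {k : ℕ} (hk : 2 ≤ k)
    (hreg : G.IsRegularOfDegree k) (hpart : ∀ e ∈ G.edgeSet, ∃! i, e ∈ (T i).edgeSet)
    (hmem : ∀ v : V, {i : ι | v ∈ (T i).support}.ncard ≤ (k + 1) / 2) (v : V) :
    ∃ i, v ∈ (T i).internalVerts := by
  apply exists_one_lt_of_ncard_ne_zero_lt_sum
  have hsupp : {i | ((T i).neighborSet v).ncard ≠ 0} = {i | v ∈ (T i).support} := by
    ext i
    simp [Set.ncard_eq_zero (Set.toFinite _), Set.eq_empty_iff_forall_notMem,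
      Subgraph.mem_support]
  have hdeg : (G.neighborSet v).ncard = k := by
    rw [Set.ncard_eq_toFinset_card', Set.toFinset_card, card_neighborSet_eq_degree, hreg v]
  rw [hsupp, sum_ncard_neighborSet_eq hpart, hdeg]
  have := hmem v
  omega

lemma two_mul_ncard_support_nonempty_le_card [DecidableRel G.Adj] {k : ℕ} (hodd : Odd k)
    (hreg : G.IsRegularOfDegree k) (hpart : ∀ e ∈ G.edgeSet, ∃! i, e ∈ (T i).edgeSet)
    (htree : ∀ i, (T i).coe.IsTree)
    (hmem : ∀ v : V, {i : ι | v ∈ (T i).support}.ncard ≤ (k + 1) / 2) :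
    2 * {i | (T i).support.Nonempty}.ncard ≤ Fintype.card V := by
  classical
  have hsum : ∑ v, {i | v ∈ (T i).support}.ncard
      = G.edgeSet.ncard + {i | (T i).support.Nonempty}.ncard := by
    rw [sum_ncard_setOf_comm, ← sum_ncard_edgeSet_eq hpart, Set.ncard_eq_toFinset_card',
      Set.toFinset_ofPred, Finset.card_filter, ← Finset.sum_add_distrib]
    exact Finset.sum_congr rfl fun i _ => Subgraph.ncard_support_eq_ncard_edgeSet_add_ite (htree i)
  have hbound : ∑ v, {i | v ∈ (T i).support}.ncard ≤ Fintype.card V * ((k + 1) / 2) := by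
    simpa using Finset.sum_le_sum fun v (_ : v ∈ Finset.univ) => hmem v
  have hedges : 2 * G.edgeSet.ncard = Fintype.card V * k := by
    rw [← coe_edgeFinset, Set.ncard_coe_finset, ← sum_degrees_eq_twice_card_edges]
    simp [hreg _]
  obtain ⟨j, rfl⟩ := hodd
  have hhalf : (2 * j + 1 + 1) / 2 = j + 1 := by omega
  rw [hhalf, mul_add_one] at hbound
  rw [mul_add_one, mul_left_comm] at hedges
  omega

end EdgePartition

end SimpleGraph

theorem stmt_13_general {V ι : Type*} [Fintype V] [Fintype ι]
    (G : SimpleGraph V) [DecidableRel G.Adj]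
    (k : ℕ) (hk3 : 3 ≤ k) (hodd : Odd k)
    (hreg : G.IsRegularOfDegree k)
    (T : ι → G.Subgraph)
    (htree : ∀ i, (T i).coe.IsTree)
    (hdiam : ∀ i, ∀ x y : (T i).verts, (T i).coe.dist x y ≤ 3)
    (hpart : ∀ e ∈ G.edgeSet, ∃! i : ι, e ∈ (T i).edgeSet)
    (hmem : ∀ v : V, {i : ι | v ∈ (T i).support}.ncard ≤ (k + 1) / 2) :
    ∃ M : G.Subgraph, M.IsPerfectMatching := by
  have hfew : 2 * {i | (T i).internalVerts.Nonempty}.ncard ≤ Fintype.card V :=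
    (Nat.mul_le_mul_left 2 (Set.ncard_le_ncard fun i hi =>
      hi.mono (T i).internalVerts_subset_support)).trans
      (SimpleGraph.two_mul_ncard_support_nonempty_le_card hodd hreg hpart htree hmem)
  exact SimpleGraph.exists_isPerfectMatching_of_isClique_cover
    (fun i => (T i).isClique_internalVerts (htree i) (hdiam i))
    (fun i => (T i).ncard_internalVerts_le_two (htree i) (hdiam i))
    (SimpleGraph.exists_mem_internalVerts (by omega) hreg hpart hmem) hfew

/-- Let `k ≥ 3` be odd and `G` a finite `k`-regular graph of girth at least 5 whose edge
set is partitioned into trees of diameter at most 3 with every vertex belonging to at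
most `(k+1)/2` of the trees. Then `G` contains a perfect matching. -/
theorem stmt_13 {V ι : Type*} [Fintype V] [Fintype ι]
    (G : SimpleGraph V) [DecidableRel G.Adj]
    (k : ℕ) (hk3 : 3 ≤ k) (hodd : Odd k)
    (hreg : G.IsRegularOfDegree k)
    (hgirth : 5 ≤ G.egirth)
    (T : ι → G.Subgraph)
    (htree : ∀ i, (T i).coe.IsTree)
    (hdiam : ∀ i, ∀ x y : (T i).verts, (T i).coe.dist x y ≤ 3)
    (hpart : ∀ e ∈ G.edgeSet, ∃! i : ι, e ∈ (T i).edgeSet)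
    (hmem : ∀ v : V, {i : ι | v ∈ (T i).support}.ncard ≤ (k + 1) / 2) :
    ∃ M : G.Subgraph, M.IsPerfectMatching :=
  stmt_13_general G k hk3 hodd hreg T htree hdiam hpart hmem
end

section
/- For every n ≥ 2, the chromatic number of the shift graph S_n is at least ⌈log₂ n⌉; more precisely, if S_n is properly colored with c colors then n ≤ 2^c. -/
/-- The shift graph `S_n`: vertices are pairs `(i,j)` with `i < j ≤ n`, and `(i,j)` is
adjacent to `(k,ℓ)` iff `j = k` or `ℓ = i`. -/
def shiftGraph (n : ℕ) : SimpleGraph {p : Fin n × Fin n // p.1 < p.2} :=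
  SimpleGraph.fromRel fun p q => p.1.2 = q.1.1

/-! A proper coloring `C` of `S_n` sends each `i` to the set of colors of the edges `(i,j)`
leaving it. For `i < j` the color of `(i,j)` lies in the set of `i` but not in that of `j`,
since every `(j,ℓ)` is adjacent to `(i,j)`; so the map is injective and `n ≤ 2 ^ #colors`. -/

namespace shiftGraph

lemma adj_of_lt {n : ℕ} {i j ℓ : Fin n} (hij : i < j) (hjℓ : j < ℓ) :
    (shiftGraph n).Adj ⟨(i, j), hij⟩ ⟨(j, ℓ), hjℓ⟩ :=
  ⟨fun h => hij.ne (congrArg (fun v => v.1.1) h), Or.inl rfl⟩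

variable {n : ℕ} {α : Type*} (C : (shiftGraph n).Coloring α)

def outColors (i : Fin n) : Set α :=
  Set.range fun j : {j // i < j} => C ⟨(i, j), j.2⟩

lemma color_mem_outColors {i j : Fin n} (hij : i < j) :
    C ⟨(i, j), hij⟩ ∈ outColors C i :=
  ⟨⟨j, hij⟩, rfl⟩

lemma color_notMem_outColors {i j : Fin n} (hij : i < j) :
    C ⟨(i, j), hij⟩ ∉ outColors C j := by
  rintro ⟨⟨ℓ, hjℓ⟩, hcol⟩
  exact C.valid (adj_of_lt hij hjℓ) hcol.symm

lemma outColors_injective : Function.Injective (outColors C) := by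
  intro i j hij
  by_contra hne
  rcases lt_or_gt_of_ne hne with hlt | hlt <;>
    exact color_notMem_outColors C hlt (hij ▸ color_mem_outColors C hlt)

lemma le_two_pow_card [Fintype α] (C : (shiftGraph n).Coloring α) :
    n ≤ 2 ^ Fintype.card α := by
  simpa [Fintype.card_set] using Fintype.card_le_of_injective _ (outColors_injective C)

end shiftGraph

theorem stmt_17_general (n : ℕ) :
    (Nat.clog 2 n : ℕ∞) ≤ (shiftGraph n).chromaticNumber ∧
    ∀ (c : ℕ), (shiftGraph n).Coloring (Fin c) → n ≤ 2 ^ c := by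
  have hpow (c : ℕ) (C : (shiftGraph n).Coloring (Fin c)) : n ≤ 2 ^ c := by
    simpa using shiftGraph.le_two_pow_card C
  refine ⟨SimpleGraph.le_chromaticNumber_iff_coloring.2 fun c C => ?_, hpow⟩
  exact_mod_cast (Nat.clog_le_iff_le_pow one_lt_two).2 (hpow c C)

/-- For every `n ≥ 2`, the chromatic number of the shift graph `S_n` is at least
`⌈log₂ n⌉`; more precisely, if `S_n` is properly colored with `c` colors then `n ≤ 2^c`. -/
theorem stmt_17 (n : ℕ) (hn : 2 ≤ n) :
    (Nat.clog 2 n : ℕ∞) ≤ (shiftGraph n).chromaticNumber ∧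
    ∀ (c : ℕ), (shiftGraph n).Coloring (Fin c) → n ≤ 2 ^ c :=
  stmt_17_general n
end
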